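/- For the constant-coefficient recurrence π_m = ρ·Σ_{j=m−k}^{m−1} π_j with ρ = λ/(nμ) > 0 and k ≥ 1: if ρ·k < 1, then the characteristic polynomial x^k − ρ(x^{k−1} + x^{k−2} + ⋯ + 1) has exactly one root in the interval (0,1). -/
import Mathlib

private lemma mkmn0_aux (k : ℕ) (hk : 1 ≤ k) (ρ : ℝ)
    {a b : ℝ} (ha : a ∈ Set.Ioo (0:ℝ) 1) (hb : b ∈ Set.Ioo (0:ℝ) 1) (hab : a < b)
    (hfa : a ^ k - ρ * ∑ i ∈ Finset.range k, a ^ i = 0)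
    (hfb : b ^ k - ρ * ∑ i ∈ Finset.range k, b ^ i = 0) : False := by
  have ha0 := ha.1
  have hb0 := hb.1
  have hea : a ^ k = ρ * ∑ i ∈ Finset.range k, a ^ i := by linarith
  have heb : b ^ k = ρ * ∑ i ∈ Finset.range k, b ^ i := by linarith
  have key : ∑ i ∈ Finset.range k, a ^ k * b ^ i < ∑ i ∈ Finset.range k, b ^ k * a ^ i := by
    apply Finset.sum_lt_sum_of_nonempty
    · exact Finset.nonempty_range_iff.mpr (by omega)
    · intro i hi
      rw [Finset.mem_range] at hi
      have hkey : a ^ (k - i) < b ^ (k - i) :=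
        pow_lt_pow_left₀ hab (le_of_lt ha0) (by omega)
      have h1 : a ^ k * b ^ i = a ^ (k - i) * (a ^ i * b ^ i) := by
        rw [← mul_assoc, ← pow_add]; congr 2; omega
      have h2 : b ^ k * a ^ i = b ^ (k - i) * (a ^ i * b ^ i) := by
        rw [← mul_assoc, mul_comm (b ^ (k-i)) (a^i), mul_assoc, ← pow_add]
        rw [mul_comm (a ^ i)]; congr 2; omega
      rw [h1, h2]
      exact mul_lt_mul_of_pos_right hkey (by positivity)
  have heq : ∑ i ∈ Finset.range k, a ^ k * b ^ i = ∑ i ∈ Finset.range k, b ^ k * a ^ i := by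
    rw [← Finset.mul_sum, ← Finset.mul_sum, hea, heb]
    ring
  linarith

/-- For the characteristic polynomial p(x) = x^k − ρ·(x^{k−1} + ⋯ + x + 1) of the tail
recurrence of the M^k/M/n(0) queue with ρ > 0, k ≥ 1, and ρ·k < 1, there is exactly one
root in the interval (0,1). -/
theorem mkmn0_char_poly_unique_root (k : ℕ) (hk : 1 ≤ k) (ρ : ℝ) (hρ : 0 < ρ)
    (hρk : ρ * k < 1) :
    ∃! r : ℝ, r ∈ Set.Ioo (0 : ℝ) 1 ∧
      r ^ k - ρ * ∑ i ∈ Finset.range k, r ^ i = 0 := by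
  set f : ℝ → ℝ := fun x => x ^ k - ρ * ∑ i ∈ Finset.range k, x ^ i with hf
  have hcont : ContinuousOn f (Set.Icc (0:ℝ) 1) := by
    apply Continuous.continuousOn
    continuity
  have hf0 : f 0 = -ρ := by
    simp only [hf]
    rw [zero_pow (by omega)]
    have : ∑ i ∈ Finset.range k, (0:ℝ) ^ i = 1 := by
      rw [Finset.sum_eq_single 0]
      · simp
      · intro i _ hi; exact zero_pow hi
      · intro h; exact absurd (Finset.mem_range.mpr (by omega)) h
    rw [this]; ring
  have hf1 : f 1 = 1 - ρ * k := by
    simp [hf]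
  have : (0:ℝ) ∈ Set.Ioo (f 0) (f 1) := by
    rw [hf0, hf1]; constructor <;> linarith
  obtain ⟨r, hr, hfr⟩ := intermediate_value_Ioo (by norm_num) hcont this
  refine ⟨r, ⟨hr, hfr⟩, ?_⟩
  rintro s ⟨hs, hfs⟩
  rcases lt_trichotomy s r with h | h | h
  · exact absurd (mkmn0_aux k hk ρ hs hr h hfs hfr) id
  · exact h
  · exact absurd (mkmn0_aux k hk ρ hr hs h hfr hfs) id
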